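/- Let X = I be a compact interval and α: ℤ_+^k → C⁰(I,I) a ℤ_+^k-action whose pairwise commuting continuous generators f_1,…,f_k are all piecewise monotone, and let N(f_i) denote the number of maximal intervals of monotonicity of f_i. Let ν be a probability measure on G_α with ν_i = ν(f_i) and f the induced random ℤ_+^k-action over (Ω, P_ν, σ). Then h(f) ≤ Σ_{i=1}^k ν_i log N(f_i). -/

import Mathlib

open MeasureTheory Filter Topology Manifold

noncomputable section

namespace RandomZk

/-- the left shift on `ℤ`-indexed sequences. -/
def shiftZ {ι : Type*} (ω : ℤ → ι) : ℤ → ι := fun n => ω (n + 1)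

/-- the left shift on `ℕ`-indexed sequences. -/
def shiftN {ι : Type*} (ω : ℕ → ι) : ℕ → ι := fun n => ω (n + 1)

/-- the random composition `f_ω^n = f_{σ^{n-1}ω} ∘ ⋯ ∘ f_ω` for `ω ∈ G^ℤ`
(note that `f_{σ^t ω} = f_{ω t}`). -/
def cocycleZ {X : Type*} {k : ℕ} (f : Fin k → X → X) (ω : ℤ → Fin k) : ℕ → X → X
  | 0 => id
  | (n + 1) => f (ω n) ∘ cocycleZ f ω n

/-- the random composition `f_ω^n` for `ω ∈ G^{ℤ_+}`. -/
def cocycleN {X : Type*} {k : ℕ} (f : Fin k → X → X) (ω : ℕ → Fin k) : ℕ → X → X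
  | 0 => id
  | (n + 1) => f (ω n) ∘ cocycleN f ω n

/-- `P` is the two-sided Bernoulli (i.i.d. product) measure `ν^ℤ` on `ι^ℤ` with marginal
weights `ν`, characterized by its values on cylinder sets. -/
def IsBernoulliZ {ι : Type*} [MeasurableSpace ι] (ν : ι → ℝ)
    (P : Measure (ℤ → ι)) : Prop :=
  IsProbabilityMeasure P ∧
    ∀ (s : Finset ℤ) (a : ℤ → ι),
      P {ω | ∀ n ∈ s, ω n = a n} = ENNReal.ofReal (∏ n ∈ s, ν (a n))

/-- `P` is the one-sided Bernoulli (i.i.d. product) measure `ν^{ℤ_+}` on `ι^{ℤ_+}`. -/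
def IsBernoulliN {ι : Type*} [MeasurableSpace ι] (ν : ι → ℝ)
    (P : Measure (ℕ → ι)) : Prop :=
  IsProbabilityMeasure P ∧
    ∀ (s : Finset ℕ) (a : ℕ → ι),
      P {ω | ∀ n ∈ s, ω n = a n} = ENNReal.ofReal (∏ n ∈ s, ν (a n))

/-- a finite Borel partition of `X`, indexed by `ι`. -/
def IsPartition {X : Type*} [MeasurableSpace X] {ι : Type*} (Q : ι → Set X) : Prop :=
  (∀ i, MeasurableSet (Q i)) ∧ Pairwise (Function.onFun Disjoint Q) ∧
    (⋃ i, Q i) = Set.univ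

/-- the static entropy `H_μ(Q) = -∑ μ(Q i) log μ(Q i)` of a finite partition. -/
def partEnt {X : Type*} [MeasurableSpace X] (μ : Measure X)
    {ι : Type*} [Fintype ι] (Q : ι → Set X) : ℝ :=
  -∑ i, (μ (Q i)).toReal * Real.log (μ (Q i)).toReal

/-- the entropy `h_μ(f, Q)` of the random `ℤ^k`-action generated by `f`, with respect to the
finite partition `Q`: the limit of `n⁻¹ ∫_Ω H_μ(⋁_{t<n} (f_ω^t)⁻¹ Q) dP(ω)` (the elements of
the join `⋁_{t<n} (f_ω^t)⁻¹ Q` are indexed by the itineraries `a : Fin n → Fin m`). -/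
def hmeasOfZ {X : Type*} [MeasurableSpace X] {k : ℕ} (f : Fin k → X → X)
    (P : Measure (ℤ → Fin k)) (μ : Measure X) {m : ℕ} (Q : Fin m → Set X) : ℝ :=
  atTop.limsup fun n : ℕ =>
    (n : ℝ)⁻¹ * ∫ ω, partEnt μ
      (fun a : Fin n → Fin m => ⋂ t : Fin n, cocycleZ f ω t ⁻¹' Q (a t)) ∂P

/-- the measure-theoretic entropy `h_μ(f)` of the random `ℤ^k`-action generated by `f`:
the supremum of `h_μ(f, Q)` over all finite Borel partitions `Q`. -/
def hmeasZ {X : Type*} [MeasurableSpace X] {k : ℕ} (f : Fin k → X → X)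
    (P : Measure (ℤ → Fin k)) (μ : Measure X) : ℝ :=
  ⨆ (m : ℕ) (Q : {Q : Fin m → Set X // IsPartition Q}), hmeasOfZ f P μ Q.1

/-- `μ` is invariant for the random system: `∫ μ(f_ω⁻¹ A) dP(ω) = μ(A)` for Borel `A`. -/
def RandInvariantZ {X : Type*} [MeasurableSpace X] {k : ℕ} (f : Fin k → X → X)
    (P : Measure (ℤ → Fin k)) (μ : Measure X) : Prop :=
  ∀ A : Set X, MeasurableSet A → ∫⁻ ω, μ (f (ω 0) ⁻¹' A) ∂P = μ A

/-- minimal cardinality of an `(ω,n,ε)`-spanning set of `X` with respect to the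
metric `ρ`, for the random `ℤ^k`-action generated by `f`. -/
def spanCardZ {X : Type*} {k : ℕ} (f : Fin k → X → X) (ρ : X → X → ℝ)
    (ω : ℤ → Fin k) (n : ℕ) (ε : ℝ) : ℕ :=
  sInf {N : ℕ | ∃ F : Finset X, F.card = N ∧
    ∀ x : X, ∃ y ∈ F, ∀ t < n, ρ (cocycleZ f ω t x) (cocycleZ f ω t y) ≤ ε}

/-- the topological entropy `h(f)` of the random `ℤ^k`-action generated by `f`, with
respect to the metric `ρ`:
`h(f) = lim_{ε→0} limsup_n n⁻¹ ∫_Ω log r(ω,n,ε,X) dP(ω)`; since the inner quantity is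
monotone in `ε`, the limit as `ε → 0` is the supremum over `ε > 0`. -/
def htopZ {X : Type*} {k : ℕ} (f : Fin k → X → X) (ρ : X → X → ℝ)
    (P : Measure (ℤ → Fin k)) : ℝ :=
  ⨆ ε : {e : ℝ // 0 < e},
    atTop.limsup fun n : ℕ =>
      (n : ℝ)⁻¹ * ∫ ω, Real.log (spanCardZ f ρ ω n ε.1) ∂P

/-- analogue of `spanCardZ` for one-sided `ℤ_+^k`-actions. -/
def spanCardN {X : Type*} {k : ℕ} (f : Fin k → X → X) (ρ : X → X → ℝ)
    (ω : ℕ → Fin k) (n : ℕ) (ε : ℝ) : ℕ :=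
  sInf {N : ℕ | ∃ F : Finset X, F.card = N ∧
    ∀ x : X, ∃ y ∈ F, ∀ t < n, ρ (cocycleN f ω t x) (cocycleN f ω t y) ≤ ε}

/-- the topological entropy of the random `ℤ_+^k`-action, with respect to the metric `ρ`. -/
def htopN {X : Type*} {k : ℕ} (f : Fin k → X → X) (ρ : X → X → ℝ)
    (P : Measure (ℕ → Fin k)) : ℝ :=
  ⨆ ε : {e : ℝ // 0 < e},
    atTop.limsup fun n : ℕ =>
      (n : ℝ)⁻¹ * ∫ ω, Real.log (spanCardN f ρ ω n ε.1) ∂P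

/-- `max_{J ⊆ {1,…,s}} ∑_{j∈J} ∑_{i=1}^k ν_i d_j λ_{i,j}`. -/
def maxJ {k : ℕ} (ν : Fin k → ℝ) (s : ℕ) (dj : ℕ → ℕ) (lam : Fin k → ℕ → ℝ) : ℝ :=
  (Finset.range s).powerset.sup' (Finset.powerset_nonempty _)
    fun J => ∑ j ∈ J, ∑ i, ν i * (dj j : ℝ) * lam i j

end RandomZk

namespace RandomZk

/-!
On each cylinder of points whose random orbit follows a fixed itinerary through the intervals of
monotonicity, every `f_ω^t` with `t < n` is monotone or antitone. There are at most
`∏_{t<n} N(ω_t)` such cylinders, and on each of them the signed sum `∑_t ±f_ω^t` is monotone and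
controls all the distances `|f_ω^t x - f_ω^t y|` at once, so `O(n / ε)` points span it. Hence
`log r(ω,n,ε) ≤ ∑_{t<n} log N(ω_t) + O(log n)`, and integrating against the Bernoulli measure
gives `n ∑ᵢ νᵢ log N(fᵢ) + O(log n)`.
-/

open Set

def MonotoneOrAntitoneOn {α β : Type*} [Preorder α] [Preorder β] (g : α → β) (s : Set α) :
    Prop :=
  MonotoneOn g s ∨ AntitoneOn g s

namespace MonotoneOrAntitoneOn

variable {α β γ : Type*} [Preorder α] [Preorder β] [Preorder γ]

theorem comp {g : β → γ} {h : α → β} {s : Set α} {t : Set β} (hg : MonotoneOrAntitoneOn g t)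
    (hh : MonotoneOrAntitoneOn h s) (hst : MapsTo h s t) : MonotoneOrAntitoneOn (g ∘ h) s := by
  rcases hg with hg | hg <;> rcases hh with hh | hh
  · exact Or.inl (hg.comp hh hst)
  · exact Or.inr (hg.comp_AntitoneOn hh hst)
  · exact Or.inr (hg.comp_MonotoneOn hh hst)
  · exact Or.inl (hg.comp hh hst)

theorem monotone_comp {g : β → γ} {h : α → β} {s : Set α} (hg : Monotone g)
    (hh : MonotoneOrAntitoneOn h s) : MonotoneOrAntitoneOn (g ∘ h) s :=
  hh.imp hg.comp_monotoneOn hg.comp_antitoneOn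

/-- Flip the sign of the antitone functions and add them all up. -/
theorem exists_abs_sub_eq_sum {α ι : Type*} [LinearOrder α] {s : Set α} (I : Finset ι)
    {u : ι → α → ℝ} (hu : ∀ t ∈ I, MonotoneOrAntitoneOn (u t) s) :
    ∃ h : α → ℝ, ∀ x ∈ s, ∀ y ∈ s, |h x - h y| = ∑ t ∈ I, |u t x - u t y| := by
  classical
  let sign : ι → ℝ := fun t => if MonotoneOn (u t) s then 1 else -1
  refine ⟨fun x => ∑ t ∈ I, sign t * u t x, ?_⟩
  have hle : ∀ x ∈ s, ∀ y ∈ s, x ≤ y →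
      ∑ t ∈ I, sign t * u t y - ∑ t ∈ I, sign t * u t x = ∑ t ∈ I, |u t x - u t y| := by
    intro x hx y hy hxy
    rw [← Finset.sum_sub_distrib]
    refine Finset.sum_congr rfl fun t ht => ?_
    by_cases hmono : MonotoneOn (u t) s
    · have := hmono hx hy hxy
      simp only [sign, if_pos hmono]
      rw [abs_sub_comm, abs_of_nonneg (by linarith)]
      ring
    · have := ((hu t ht).resolve_left hmono) hx hy hxy
      simp only [sign, if_neg hmono]
      rw [abs_of_nonneg (by linarith)]
      ring
  intro x hx y hy
  wlog hxy : x ≤ y generalizing x y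
  · rw [abs_sub_comm, this y hy x hx (le_of_not_ge hxy)]
    exact Finset.sum_congr rfl fun t _ => abs_sub_comm _ _
  rw [abs_sub_comm, ← hle x hx y hy hxy, abs_of_nonneg]
  rw [hle x hx y hy hxy]
  exact Finset.sum_nonneg fun t _ => abs_nonneg _

end MonotoneOrAntitoneOn

theorem exists_finset_abs_sub_le_of_mapsTo_Icc {X : Type*} {S : Set X} {g : X → ℝ}
    {c L ε : ℝ} (hε : 0 < ε) (hg : MapsTo g S (Icc c (c + L))) :
    ∃ F : Finset X, ↑F ⊆ S ∧ F.card ≤ ⌈L / ε⌉₊ + 1 ∧ ∀ x ∈ S, ∃ y ∈ F, |g x - g y| ≤ ε := by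
  classical
  rcases S.eq_empty_or_nonempty with rfl | ⟨z, -⟩
  · exact ⟨∅, by simp, by simp, by simp⟩
  have : Nonempty X := ⟨z⟩
  let bucket : X → ℕ := fun x => ⌊(g x - c) / ε⌋₊
  refine ⟨((Finset.range (⌈L / ε⌉₊ + 1)).image (Function.invFunOn bucket S)).filter (· ∈ S),
    fun y hy => (Finset.mem_filter.mp hy).2, ?_, ?_⟩
  · exact Finset.card_filter_le _ _ |>.trans <| Finset.card_image_le.trans (Finset.card_range _).le
  intro x hx
  have hex : ∃ x' ∈ S, bucket x' = bucket x := ⟨x, hx, rfl⟩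
  have hbucket : bucket x < ⌈L / ε⌉₊ + 1 :=
    Nat.lt_succ_of_le <| (Nat.floor_le_floor
      (div_le_div_of_nonneg_right (by linarith [(hg hx).2]) hε.le)).trans (Nat.floor_le_ceil _)
  set y := Function.invFunOn bucket S (bucket x)
  have hy : y ∈ S := Function.invFunOn_mem hex
  have hxy : bucket y = bucket x := Function.invFunOn_eq hex
  refine ⟨y, Finset.mem_filter.mpr
    ⟨Finset.mem_image_of_mem _ (Finset.mem_range.mpr hbucket), hy⟩, ?_⟩
  have hpos : ∀ w ∈ S, 0 ≤ (g w - c) / ε := fun w hw =>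
    div_nonneg (by linarith [(hg hw).1]) hε.le
  have hdiff : |(g x - c) / ε - (g y - c) / ε| < 1 := by
    have hx₁ : (bucket x : ℝ) ≤ (g x - c) / ε := Nat.floor_le (hpos x hx)
    have hx₂ : (g x - c) / ε < bucket x + 1 := Nat.lt_floor_add_one _
    have hy₁ : (bucket x : ℝ) ≤ (g y - c) / ε := hxy ▸ Nat.floor_le (hpos y hy)
    have hy₂ : (g y - c) / ε < bucket x + 1 := hxy ▸ Nat.lt_floor_add_one _
    rw [abs_sub_lt_iff]
    constructor <;> linarith
  rw [show (g x - c) / ε - (g y - c) / ε = (g x - g y) / ε by ring, abs_div, abs_of_pos hε,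
    div_lt_one hε] at hdiff
  exact hdiff.le

theorem exists_finset_forall_abs_sub_le_of_monotoneOrAntitoneOn {X : Type*} [LinearOrder X]
    {S : Set X} {n : ℕ} {u : ℕ → X → ℝ} {D ε : ℝ} (hε : 0 < ε)
    (hu : ∀ t < n, MonotoneOrAntitoneOn (u t) S)
    (hD : ∀ t < n, ∀ x ∈ S, ∀ y ∈ S, |u t x - u t y| ≤ D) :
    ∃ F : Finset X, F.card ≤ ⌈2 * D / ε * n⌉₊ + 1 ∧
      ∀ x ∈ S, ∃ y ∈ F, ∀ t < n, |u t x - u t y| ≤ ε := by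
  rcases S.eq_empty_or_nonempty with rfl | ⟨z, hz⟩
  · exact ⟨∅, by simp, by simp⟩
  obtain ⟨h, hh⟩ := MonotoneOrAntitoneOn.exists_abs_sub_eq_sum (Finset.range n)
    fun t ht => hu t (Finset.mem_range.mp ht)
  have hsum_le : ∀ x ∈ S, ∀ y ∈ S, |h x - h y| ≤ n * D := fun x hx y hy => by
    rw [hh x hx y hy]
    calc ∑ t ∈ Finset.range n, |u t x - u t y| ≤ ∑ _t ∈ Finset.range n, D :=
          Finset.sum_le_sum fun t ht => hD t (Finset.mem_range.mp ht) x hx y hy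
      _ = n * D := by simp
  have hmaps : MapsTo h S (Icc (h z - n * D) (h z - n * D + 2 * (n * D))) := fun x hx => by
    have := abs_le.mp (hsum_le x hx z hz)
    constructor <;> linarith
  obtain ⟨F, hFS, hcard, hF⟩ := exists_finset_abs_sub_le_of_mapsTo_Icc hε hmaps
  refine ⟨F, hcard.trans_eq (by ring_nf), fun x hx => ?_⟩
  obtain ⟨y, hyF, hxy⟩ := hF x hx
  refine ⟨y, hyF, fun t ht => le_trans ?_ hxy⟩
  rw [hh x hx y (hFS hyF)]
  exact Finset.single_le_sum (f := fun t => |u t x - u t y|) (fun _ _ => abs_nonneg _)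
    (Finset.mem_range.mpr ht)

theorem Fin.exists_castSucc_le_and_le_succ {α : Type*} [LinearOrder α] {m : ℕ}
    (c : Fin (m + 2) → α) {x : α} (h0 : c 0 ≤ x) (hlast : x ≤ c (Fin.last _)) :
    ∃ t : Fin (m + 1), c t.castSucc ≤ x ∧ x ≤ c t.succ := by
  induction m with
  | zero => exact ⟨0, h0, hlast⟩
  | succ m ih =>
    by_cases hx : x ≤ c (Fin.last (m + 1)).castSucc
    · obtain ⟨t, ht⟩ := ih (c ∘ Fin.castSucc) h0 hx
      exact ⟨t.castSucc, ht.1, by rw [Fin.succ_castSucc]; exact ht.2⟩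
    · exact ⟨Fin.last _, (not_le.mp hx).le, hlast⟩

section Itinerary

variable {X : Type*} {k : ℕ} (f : Fin k → X → X) {m : Fin k → ℕ}
  (S : (i : Fin k) → Fin (m i) → Set X)

def itineraryCylinder (ω : ℕ → Fin k) {n : ℕ} (a : (t : Fin n) → Fin (m (ω t))) : Set X :=
  {x | ∀ t : Fin n, cocycleN f ω t x ∈ S (ω t) (a t)}

variable {f S}

theorem exists_mem_itineraryCylinder (hS : ∀ i x, ∃ j, x ∈ S i j) (ω : ℕ → Fin k) (n : ℕ)
    (x : X) : ∃ a : (t : Fin n) → Fin (m (ω t)), x ∈ itineraryCylinder f S ω a :=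
  ⟨fun t => (hS (ω t) (cocycleN f ω t x)).choose,
    fun t => (hS (ω t) (cocycleN f ω t x)).choose_spec⟩

theorem monotoneOrAntitoneOn_cocycleN_itineraryCylinder [LinearOrder X]
    (hS : ∀ i j, MonotoneOrAntitoneOn (f i) (S i j)) (ω : ℕ → Fin k) {n : ℕ}
    (a : (t : Fin n) → Fin (m (ω t))) :
    ∀ t ≤ n, MonotoneOrAntitoneOn (cocycleN f ω t) (itineraryCylinder f S ω a) := by
  intro t
  induction t with
  | zero => exact fun _ => Or.inl monotoneOn_id
  | succ t ih =>
    intro ht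
    exact (hS (ω t) (a ⟨t, ht⟩)).comp (ih (Nat.le_of_succ_le ht))
      fun x (hx : ∀ s : Fin n, cocycleN f ω s x ∈ S (ω s) (a s)) => hx ⟨t, ht⟩

end Itinerary

theorem spanCardN_le_card_mul {X : Type*} {k : ℕ} (f : Fin k → X → X) (ρ : X → X → ℝ)
    (ω : ℕ → Fin k) (n : ℕ) (ε : ℝ) {ι : Type*} [Fintype ι] {S : ι → Set X}
    (hcover : ∀ x, ∃ i, x ∈ S i) {C : ℕ}
    (hC : ∀ i, ∃ F : Finset X, F.card ≤ C ∧
      ∀ x ∈ S i, ∃ y ∈ F, ∀ t < n, ρ (cocycleN f ω t x) (cocycleN f ω t y) ≤ ε) :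
    spanCardN f ρ ω n ε ≤ Fintype.card ι * C := by
  classical
  choose F hFcard hF using hC
  have hspan : spanCardN f ρ ω n ε ≤ (Finset.univ.biUnion F).card := by
    refine Nat.sInf_le ⟨_, rfl, fun x => ?_⟩
    obtain ⟨i, hi⟩ := hcover x
    obtain ⟨y, hy, hxy⟩ := hF i x hi
    exact ⟨y, Finset.mem_biUnion.mpr ⟨i, Finset.mem_univ _, hy⟩, hxy⟩
  exact hspan.trans (Finset.card_biUnion_le_card_mul _ _ _ fun i _ => hFcard i)

theorem spanCardN_Icc_le_prod_mul {a b : ℝ} {k : ℕ} {f : Fin k → Icc a b → Icc a b}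
    {m : Fin k → ℕ} {S : (i : Fin k) → Fin (m i) → Set (Icc a b)}
    (hcover : ∀ i x, ∃ j, x ∈ S i j) (hmono : ∀ i j, MonotoneOrAntitoneOn (f i) (S i j))
    (ω : ℕ → Fin k) (n : ℕ) {ε : ℝ} (hε : 0 < ε) :
    spanCardN f dist ω n ε ≤
      (∏ t ∈ Finset.range n, m (ω t)) * (⌈2 * (b - a) / ε * n⌉₊ + 1) := by
  have hcard := spanCardN_le_card_mul f dist ω n ε (S := itineraryCylinder f S ω)
    (exists_mem_itineraryCylinder hcover ω n)
    (C := ⌈2 * (b - a) / ε * n⌉₊ + 1) fun itin => ?_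
  · simpa [Fintype.card_pi, Fin.prod_univ_eq_prod_range (fun t => m (ω t))] using hcard
  obtain ⟨F, hFcard, hF⟩ := exists_finset_forall_abs_sub_le_of_monotoneOrAntitoneOn
    (u := fun t x => (cocycleN f ω t x).val) (D := b - a) hε
    (fun t ht => (monotoneOrAntitoneOn_cocycleN_itineraryCylinder hmono ω itin t ht.le
      |>.monotone_comp (Subtype.mono_coe _)))
    (fun t _ x _ y _ => abs_sub_le_iff.mpr
      ⟨by linarith [(cocycleN f ω t x).2.2, (cocycleN f ω t y).2.1],
        by linarith [(cocycleN f ω t x).2.1, (cocycleN f ω t y).2.2]⟩)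
  exact ⟨F, hFcard, fun x hx => by simpa [Subtype.dist_eq, Real.dist_eq] using hF x hx⟩

theorem exists_monotoneOrAntitoneOn_cover_of_breakpoints {a b : ℝ} {g : Icc a b → Icc a b}
    {N : ℕ} (hg : ∃ c : Fin (N + 1) → ℝ, c 0 = a ∧ c (Fin.last _) = b ∧
      ∀ t : Fin N,
        MonotoneOn (fun x : (Icc a b) => (g x : ℝ))
          {x : (Icc a b) | c t.castSucc ≤ (x : ℝ) ∧ (x : ℝ) ≤ c t.succ} ∨
        AntitoneOn (fun x : (Icc a b) => (g x : ℝ))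
          {x : (Icc a b) | c t.castSucc ≤ (x : ℝ) ∧ (x : ℝ) ≤ c t.succ}) :
    ∃ S : Fin (max N 1) → Set (Icc a b),
      (∀ x, ∃ j, x ∈ S j) ∧ ∀ j, MonotoneOrAntitoneOn g (S j) := by
  obtain ⟨c, hc0, hclast, hmono⟩ := hg
  rcases N with _ | N
  · -- a single breakpoint forces `a = b`, so the interval is a point
    have hsub : (univ : Set (Icc a b)).Subsingleton := fun x _ y _ =>
      Subtype.ext (by linarith [x.2.1, x.2.2, y.2.1, y.2.2, hc0.symm.trans hclast])
    exact ⟨fun _ => univ, fun _ => ⟨⟨0, Nat.one_pos⟩, trivial⟩,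
      fun _ => Or.inl (hsub.monotoneOn g)⟩
  rw [max_eq_left (Nat.le_add_left 1 N)]
  refine ⟨fun t => {x | c t.castSucc ≤ (x : ℝ) ∧ (x : ℝ) ≤ c t.succ}, fun x => ?_, fun t => ?_⟩
  · exact Fin.exists_castSucc_le_and_le_succ c (hc0 ▸ x.2.1) (hclast ▸ x.2.2)
  · exact (hmono t).imp (fun h _ hx _ hy hxy => Subtype.coe_le_coe.mp (h hx hy hxy))
      (fun h _ hx _ hy hxy => Subtype.coe_le_coe.mp (h hx hy hxy))

theorem integrable_comp_eval {ι : Type*} [Finite ι] [MeasurableSpace ι]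
    [MeasurableSingletonClass ι] {P : Measure (ℕ → ι)} [IsFiniteMeasure P] (g : ι → ℝ) (t : ℕ) :
    Integrable (fun ω => g (ω t)) P :=
  Integrable.of_finite.comp_measurable (f := fun ω : ℕ → ι => ω t) (measurable_pi_apply t)

section Bernoulli

variable {ι : Type*} [Fintype ι] [MeasurableSpace ι] [MeasurableSingletonClass ι] {ν : ι → ℝ}
  {P : Measure (ℕ → ι)}

theorem IsBernoulliN.integral_comp_eval (hν0 : ∀ i, 0 ≤ ν i) (hP : IsBernoulliN ν P)
    (g : ι → ℝ) (t : ℕ) : ∫ ω, g (ω t) ∂P = ∑ i, ν i * g i := by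
  have := hP.1
  have heval : Measurable fun ω : ℕ → ι => ω t := measurable_pi_apply t
  rw [← integral_map heval.aemeasurable (Integrable.of_finite.aestronglyMeasurable),
    integral_fintype Integrable.of_finite]
  refine Finset.sum_congr rfl fun i _ => ?_
  have hcyl : (fun ω : ℕ → ι => ω t) ⁻¹' {i} = {ω | ∀ n ∈ ({t} : Finset ℕ), ω n = i} := by
    ext ω; simp
  rw [measureReal_def, Measure.map_apply heval (measurableSet_singleton i), hcyl,
    hP.2 {t} fun _ => i, Finset.prod_singleton, ENNReal.toReal_ofReal (hν0 i), smul_eq_mul]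

end Bernoulli

theorem log_natCast_le_sum_log_add_log {α : Type*} {s : Finset α} {m : α → ℕ} {c r : ℕ}
    (h : r ≤ (∏ t ∈ s, m t) * c) :
    Real.log r ≤ ∑ t ∈ s, Real.log (m t) + Real.log c := by
  rcases r.eq_zero_or_pos with rfl | hr
  · simpa using add_nonneg (Finset.sum_nonneg fun t _ => Real.log_natCast_nonneg (m t))
      (Real.log_natCast_nonneg c)
  have hprod : 0 < (∏ t ∈ s, m t) * c := hr.trans_le h
  have hm : ∀ t ∈ s, (m t : ℝ) ≠ 0 := fun t ht =>
    Nat.cast_ne_zero.mpr (Finset.prod_ne_zero_iff.mp (Nat.pos_of_mul_pos_right hprod).ne' t ht)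
  have hc : (c : ℝ) ≠ 0 := Nat.cast_ne_zero.mpr (Nat.pos_of_mul_pos_left hprod).ne'
  calc Real.log r ≤ Real.log ((∏ t ∈ s, m t) * c : ℕ) :=
        Real.log_le_log (Nat.cast_pos.mpr hr) (Nat.cast_le.mpr h)
    _ = ∑ t ∈ s, Real.log (m t) + Real.log c := by
        rw [Nat.cast_mul, Nat.cast_prod, Real.log_mul (Finset.prod_ne_zero_iff.mpr hm) hc,
          Real.log_prod hm]

theorem tendsto_inv_mul_log_mul_add_atTop {α : ℝ} (hα : 0 < α) (β : ℝ) :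
    Tendsto (fun x : ℝ => x⁻¹ * Real.log (α * x + β)) atTop (𝓝 0) := by
  have h := (Real.tendsto_pow_log_div_mul_add_atTop α⁻¹ (-(β / α)) 1 (inv_ne_zero hα.ne')).comp
    (tendsto_atTop_add_const_right atTop β (tendsto_id.const_mul_atTop hα))
  refine h.congr' ?_
  filter_upwards [eventually_ne_atTop 0] with x hx
  simp only [Function.comp_apply, id, pow_one]
  field_simp
  ring

theorem tendsto_inv_mul_log_natCeil_mul_add_one (α : ℝ) :
    Tendsto (fun n : ℕ => (n : ℝ)⁻¹ * Real.log (⌈α * n⌉₊ + 1 : ℕ)) atTop (𝓝 0) := by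
  refine tendsto_of_tendsto_of_tendsto_of_le_of_le tendsto_const_nhds
    ((tendsto_inv_mul_log_mul_add_atTop (by positivity : 0 < |α| + 1) 2).comp
      tendsto_natCast_atTop_atTop) (fun n => ?_) (fun n => ?_)
  · exact mul_nonneg (inv_nonneg.mpr n.cast_nonneg) (Real.log_natCast_nonneg _)
  refine mul_le_mul_of_nonneg_left (Real.log_le_log (by positivity) ?_) (by positivity)
  have hceil : (⌈α * n⌉₊ : ℝ) < |α| * n + 1 := by
    calc (⌈α * n⌉₊ : ℝ) ≤ ⌈|α * n|⌉₊ := Nat.cast_le.mpr (Nat.ceil_mono (le_abs_self _))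
      _ < |α * n| + 1 := Nat.ceil_lt_add_one (abs_nonneg _)
      _ = |α| * n + 1 := by rw [abs_mul, Nat.abs_cast]
  push_cast
  nlinarith [n.cast_nonneg (α := ℝ)]

theorem IsBernoulliN.integral_log_le_of_le_prod_mul {ι : Type*} [Fintype ι] [MeasurableSpace ι]
    [MeasurableSingletonClass ι] {ν : ι → ℝ} {P : Measure (ℕ → ι)} (hν0 : ∀ i, 0 ≤ ν i)
    (hP : IsBernoulliN ν P) {g : (ℕ → ι) → ℕ} {m : ι → ℕ} {n c : ℕ}
    (hg : ∀ ω, g ω ≤ (∏ t ∈ Finset.range n, m (ω t)) * c) :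
    ∫ ω, Real.log (g ω) ∂P ≤ n * ∑ i, ν i * Real.log (m i) + Real.log c := by
  have := hP.1
  have hsum : Integrable (fun ω => ∑ t ∈ Finset.range n, Real.log (m (ω t))) P :=
    integrable_finsetSum _ fun t _ => integrable_comp_eval (fun i => Real.log (m i)) t
  calc ∫ ω, Real.log (g ω) ∂P
      ≤ ∫ ω, (∑ t ∈ Finset.range n, Real.log (m (ω t)) + Real.log c) ∂P :=
        integral_mono_of_nonneg (ae_of_all _ fun _ => Real.log_natCast_nonneg _)
          (hsum.add (integrable_const _))
          (ae_of_all _ fun ω => log_natCast_le_sum_log_add_log (hg ω))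
    _ = n * ∑ i, ν i * Real.log (m i) + Real.log c := by
        rw [integral_add hsum (integrable_const _),
          integral_finsetSum _ fun t _ => integrable_comp_eval (fun i => Real.log (m i)) t]
        simp [hP.integral_comp_eval hν0 (fun i => Real.log (m i))]

theorem htopN_le_of_spanCardN_le_prod_mul {X : Type*} {k : ℕ} (f : Fin k → X → X)
    (ρ : X → X → ℝ) {ν : Fin k → ℝ} {P : Measure (ℕ → Fin k)} (hν0 : ∀ i, 0 ≤ ν i)
    (hP : IsBernoulliN ν P) (m : Fin k → ℕ)
    (hspan : ∀ ε > 0, ∃ C : ℕ → ℕ, Tendsto (fun n : ℕ => (n : ℝ)⁻¹ * Real.log (C n)) atTop (𝓝 0) ∧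
      ∀ ω n, spanCardN f ρ ω n ε ≤ (∏ t ∈ Finset.range n, m (ω t)) * C n) :
    htopN f ρ P ≤ ∑ i, ν i * Real.log (m i) := by
  set R := ∑ i, ν i * Real.log (m i)
  have hR : 0 ≤ R := Finset.sum_nonneg fun i _ => mul_nonneg (hν0 i) (Real.log_natCast_nonneg _)
  refine Real.iSup_le (fun ε => ?_) hR
  obtain ⟨C, hC, hle⟩ := hspan ε.1 ε.2
  have hnonneg : ∀ n : ℕ, 0 ≤ (n : ℝ)⁻¹ * ∫ ω, Real.log (spanCardN f ρ ω n ε.1) ∂P := fun n =>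
    mul_nonneg (by positivity) (integral_nonneg fun _ => Real.log_natCast_nonneg _)
  have hbound : ∀ᶠ n : ℕ in atTop, (n : ℝ)⁻¹ * ∫ ω, Real.log (spanCardN f ρ ω n ε.1) ∂P ≤
      R + (n : ℝ)⁻¹ * Real.log (C n) := by
    filter_upwards [eventually_ne_atTop 0] with n hn
    calc _ ≤ (n : ℝ)⁻¹ * (n * R + Real.log (C n)) := mul_le_mul_of_nonneg_left
          (hP.integral_log_le_of_le_prod_mul hν0 fun ω => hle ω n) (by positivity)
      _ = _ := by rw [mul_add, inv_mul_cancel_left₀ (Nat.cast_ne_zero.mpr hn)]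
  have hlim : Tendsto (fun n : ℕ => R + (n : ℝ)⁻¹ * Real.log (C n)) atTop (𝓝 R) := by
    simpa using tendsto_const_nhds.add hC
  exact (limsup_le_limsup hbound (isCoboundedUnder_le_of_le atTop hnonneg)
    hlim.isBoundedUnder_le).trans_eq hlim.limsup_eq

theorem topological_entropy_piecewise_monotone_interval_general
    {k : ℕ} (a b : ℝ)
    (f : Fin k → (Set.Icc a b) → (Set.Icc a b))
    (N : Fin k → ℕ)
    (hpm : ∀ i, ∃ c : Fin (N i + 1) → ℝ, Monotone c ∧ c 0 = a ∧ c (Fin.last _) = b ∧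
      ∀ t : Fin (N i),
        MonotoneOn (fun x : (Set.Icc a b) => (f i x : ℝ))
          {x : (Set.Icc a b) | c t.castSucc ≤ (x : ℝ) ∧ (x : ℝ) ≤ c t.succ} ∨
        AntitoneOn (fun x : (Set.Icc a b) => (f i x : ℝ))
          {x : (Set.Icc a b) | c t.castSucc ≤ (x : ℝ) ∧ (x : ℝ) ≤ c t.succ})
    (ν : Fin k → ℝ) (hν0 : ∀ i, 0 ≤ ν i)
    (P : Measure (ℕ → Fin k)) (hP : IsBernoulliN ν P) :
    htopN f dist P ≤ ∑ i, ν i * Real.log (N i) := by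
  choose S hcover hmono using fun i =>
    exists_monotoneOrAntitoneOn_cover_of_breakpoints ((hpm i).imp fun _ hc => hc.2)
  calc htopN f dist P ≤ ∑ i, ν i * Real.log (max (N i) 1 : ℕ) :=
        htopN_le_of_spanCardN_le_prod_mul f dist hν0 hP _ fun ε hε =>
          ⟨_, tendsto_inv_mul_log_natCeil_mul_add_one (2 * (b - a) / ε),
            fun ω n => spanCardN_Icc_le_prod_mul hcover hmono ω n hε⟩
    _ = ∑ i, ν i * Real.log (N i) := by
        refine Finset.sum_congr rfl fun i _ => ?_
        rcases Nat.eq_zero_or_pos (N i) with h | h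
        · simp [h]
        · rw [max_eq_left h]

/-- **Topological entropy of random `ℤ_+^k`-actions generated by piecewise monotone interval
maps** (Proposition 3.5(2)): if the pairwise commuting continuous generators `f i` of a
`ℤ_+^k`-action on a compact interval `I = [a,b]` are piecewise monotone with `N i` intervals
of monotonicity, then the induced random `ℤ_+^k`-action satisfies
`h(f) ≤ ∑ᵢ ν_i log N(f_i)`. -/
theorem topological_entropy_piecewise_monotone_interval
    {k : ℕ} (a b : ℝ) (hab : a ≤ b)
    (f : Fin k → (Set.Icc a b) → (Set.Icc a b)) (hcont : ∀ i, Continuous (f i))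
    (hcomm : ∀ i j, f i ∘ f j = f j ∘ f i)
    (N : Fin k → ℕ)
    (hpm : ∀ i, ∃ c : Fin (N i + 1) → ℝ, Monotone c ∧ c 0 = a ∧ c (Fin.last _) = b ∧
      ∀ t : Fin (N i),
        MonotoneOn (fun x : (Set.Icc a b) => (f i x : ℝ))
          {x : (Set.Icc a b) | c t.castSucc ≤ (x : ℝ) ∧ (x : ℝ) ≤ c t.succ} ∨
        AntitoneOn (fun x : (Set.Icc a b) => (f i x : ℝ))
          {x : (Set.Icc a b) | c t.castSucc ≤ (x : ℝ) ∧ (x : ℝ) ≤ c t.succ})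
    (ν : Fin k → ℝ) (hν0 : ∀ i, 0 ≤ ν i) (hν1 : ∑ i, ν i = 1)
    (P : Measure (ℕ → Fin k)) (hP : IsBernoulliN ν P) :
    htopN f dist P ≤ ∑ i, ν i * Real.log (N i) :=
  topological_entropy_piecewise_monotone_interval_general a b f N hpm ν hν0 P hP

end RandomZk
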